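/- Let f₁(x₁,x₂) be α₁-strongly g-convex in x₁ in metric M₁(x₁) for each fixed x₂, and f₂(x₁,x₂) be α₂-strongly g-convex in x₂ in metric M₂(x₂) for each fixed x₁, with the scaled skew-symmetry condition ∂²f₁/∂x₂∂x₁ = -k(∂²f₂/∂x₁∂x₂)ᵀ for a constant k > 0. Then the coupled natural gradient dynamics ẋ₁ = -M₁⁻¹∂f₁/∂x₁, ẋ₂ = -M₂⁻¹∂f₂/∂x₂ satisfy the contraction matrix inequality Ṁ + AᵀM + MA ⪯ -2 min(α₁,α₂)M in the metric M = diag(M₁, k·M₂). -/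

import Mathlib

open Matrix

noncomputable def pd {ι : Type*} [Fintype ι] [DecidableEq ι]
    (f : (ι → ℝ) → ℝ) (i : ι) (x : ι → ℝ) : ℝ :=
  fderiv ℝ f x (Pi.single i 1)

noncomputable def christoffel {ι : Type*} [Fintype ι] [DecidableEq ι]
    (M : (ι → ℝ) → Matrix ι ι ℝ) (m i j : ι) (x : ι → ℝ) : ℝ :=
  (1 / 2) * ∑ k, (M x)⁻¹ m k *
    (pd (fun y => M y i k) j x + pd (fun y => M y j k) i x - pd (fun y => M y i j) k x)

noncomputable def riemHess {ι : Type*} [Fintype ι] [DecidableEq ι]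
    (M : (ι → ℝ) → Matrix ι ι ℝ) (f : (ι → ℝ) → ℝ) (x : ι → ℝ) : Matrix ι ι ℝ :=
  Matrix.of fun i j =>
    pd (fun y => pd f j y) i x - ∑ k, christoffel M k i j x * pd f k x


/-- Jacobian of an autonomous vector field on (ι → ℝ). -/
noncomputable def jacobianA {ι : Type*} [Fintype ι] [DecidableEq ι]
    (h : (ι → ℝ) → ι → ℝ) (x : ι → ℝ) : Matrix ι ι ℝ :=
  Matrix.of fun i j => pd (fun y => h y i) j x

/-- Ṁ = Σᵢ (∂M/∂xᵢ) hᵢ along an autonomous vector field h. -/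
noncomputable def mDotA {ι : Type*} [Fintype ι] [DecidableEq ι]
    (M : (ι → ℝ) → Matrix ι ι ℝ) (h : (ι → ℝ) → ι → ℝ) (x : ι → ℝ) :
    Matrix ι ι ℝ :=
  Matrix.of fun i j => ∑ k, pd (fun y => M y i j) k x * h x k

/-- Block-diagonal metric diag(M₁, k·M₂) on the combined state. -/
noncomputable def gameMetric {n m : ℕ} (k : ℝ)
    (M₁ : (Fin n → ℝ) → Matrix (Fin n) (Fin n) ℝ)
    (M₂ : (Fin m → ℝ) → Matrix (Fin m) (Fin m) ℝ)
    (z : (Fin n ⊕ Fin m) → ℝ) : Matrix (Fin n ⊕ Fin m) (Fin n ⊕ Fin m) ℝ :=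
  Matrix.fromBlocks (M₁ (z ∘ Sum.inl)) 0 0 (k • M₂ (z ∘ Sum.inr))

/-- Coupled natural gradient dynamics ẋ₁ = -M₁⁻¹∂f₁/∂x₁, ẋ₂ = -M₂⁻¹∂f₂/∂x₂. -/
noncomputable def gameDynamics {n m : ℕ}
    (f₁ f₂ : (Fin n → ℝ) → (Fin m → ℝ) → ℝ)
    (M₁ : (Fin n → ℝ) → Matrix (Fin n) (Fin n) ℝ)
    (M₂ : (Fin m → ℝ) → Matrix (Fin m) (Fin m) ℝ)
    (z : (Fin n ⊕ Fin m) → ℝ) : (Fin n ⊕ Fin m) → ℝ :=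
  Sum.elim
    (-((M₁ (z ∘ Sum.inl))⁻¹.mulVec fun i =>
        pd (fun y => f₁ y (z ∘ Sum.inr)) i (z ∘ Sum.inl)))
    (-((M₂ (z ∘ Sum.inr))⁻¹.mulVec fun j =>
        pd (fun w => f₂ (z ∘ Sum.inl) w) j (z ∘ Sum.inr)))

set_option linter.unusedSectionVars false
set_option linter.unusedVariables false
set_option maxHeartbeats 1000000

section Aux
variable {ι : Type*} [Fintype ι] [DecidableEq ι]
variable {E : Type*} [NormedAddCommGroup E] [NormedSpace ℝ E]

lemma differentiableAt_matrix_det {N : E → Matrix ι ι ℝ} {x : E}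
    (h : ∀ i j, DifferentiableAt ℝ (fun y => N y i j) x) :
    DifferentiableAt ℝ (fun y => (N y).det) x := by
  have e : (fun y => (N y).det)
      = fun y => ∑ σ : Equiv.Perm ι, ((Equiv.Perm.sign σ : ℤ) : ℝ) * ∏ i, N y (σ i) i := by
    funext y
    rw [Matrix.det_apply]
    congr 1; funext σ
    simp [Units.smul_def, zsmul_eq_mul]
  rw [e]
  refine DifferentiableAt.fun_sum fun σ _ => DifferentiableAt.const_mul ?_ _
  exact (HasFDerivAt.finset_prod (u := Finset.univ) (g := fun i y => N y (σ i) i)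
    (fun i _ => (h (σ i) i).hasFDerivAt)).differentiableAt

lemma differentiableAt_matrix_inv {N : E → Matrix ι ι ℝ} {x : E}
    (h : ∀ i j, DifferentiableAt ℝ (fun y => N y i j) x)
    (hdet : (N x).det ≠ 0) (i j : ι) :
    DifferentiableAt ℝ (fun y => (N y)⁻¹ i j) x := by
  have e : (fun y => (N y)⁻¹ i j)
      = fun y => ((N y).det)⁻¹ * (N y).adjugate i j := by
    funext y
    rw [Matrix.inv_def, Matrix.smul_apply, Ring.inverse_eq_inv', smul_eq_mul]
  rw [e]
  have hadj : DifferentiableAt ℝ (fun y => (N y).adjugate i j) x := by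
    have e2 : (fun y => (N y).adjugate i j)
        = fun y => ((N y).updateRow j (Pi.single i 1)).det := by
      funext y; rw [Matrix.adjugate_apply]
    rw [e2]
    apply differentiableAt_matrix_det
    intro a b
    by_cases hab : a = j
    · subst hab; simp only [Matrix.updateRow_self]; exact differentiableAt_const _
    · simp only [Matrix.updateRow_ne hab]; exact h a b
  exact ((differentiableAt_matrix_det h).inv hdet).mul hadj

end Aux
section SumAux
variable {ι κ : Type*} [Fintype ι] [DecidableEq ι] [Fintype κ] [DecidableEq κ]

noncomputable def restL : ((ι ⊕ κ) → ℝ) →L[ℝ] (ι → ℝ) :=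
  ContinuousLinearMap.pi fun i => ContinuousLinearMap.proj (Sum.inl i)

noncomputable def restR : ((ι ⊕ κ) → ℝ) →L[ℝ] (κ → ℝ) :=
  ContinuousLinearMap.pi fun j => ContinuousLinearMap.proj (Sum.inr j)

lemma restL_single_inl (j : ι) :
    restL (ι := ι) (κ := κ) (Pi.single (Sum.inl j) 1) = Pi.single j 1 := by
  funext i
  simp [restL, ContinuousLinearMap.pi_apply, Pi.single_apply]

lemma restL_single_inr (j : κ) :
    restL (ι := ι) (κ := κ) (Pi.single (Sum.inr j) 1) = 0 := by
  funext i
  simp [restL, ContinuousLinearMap.pi_apply, Pi.single_apply]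

lemma restR_single_inr (j : κ) :
    restR (ι := ι) (κ := κ) (Pi.single (Sum.inr j) 1) = Pi.single j 1 := by
  funext i
  simp [restR, ContinuousLinearMap.pi_apply, Pi.single_apply]

lemma restR_single_inl (j : ι) :
    restR (ι := ι) (κ := κ) (Pi.single (Sum.inl j) 1) = 0 := by
  funext i
  simp [restR, ContinuousLinearMap.pi_apply, Pi.single_apply]

lemma diffAt_comp_left {φ : (ι → ℝ) → ℝ} {z : (ι ⊕ κ) → ℝ}
    (hφ : DifferentiableAt ℝ φ (z ∘ Sum.inl)) :
    DifferentiableAt ℝ (fun y => φ (y ∘ Sum.inl)) z := by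
  have hL : DifferentiableAt ℝ (fun y : (ι ⊕ κ) → ℝ => y ∘ Sum.inl) z :=
    (restL (ι := ι) (κ := κ)).differentiableAt
  exact hφ.comp z hL

lemma diffAt_comp_right {φ : (κ → ℝ) → ℝ} {z : (ι ⊕ κ) → ℝ}
    (hφ : DifferentiableAt ℝ φ (z ∘ Sum.inr)) :
    DifferentiableAt ℝ (fun y => φ (y ∘ Sum.inr)) z := by
  have hR : DifferentiableAt ℝ (fun y : (ι ⊕ κ) → ℝ => y ∘ Sum.inr) z :=
    (restR (ι := ι) (κ := κ)).differentiableAt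
  exact hφ.comp z hR

lemma pd_comp_left {φ : (ι → ℝ) → ℝ} {z : (ι ⊕ κ) → ℝ}
    (hφ : DifferentiableAt ℝ φ (z ∘ Sum.inl)) (d : ι ⊕ κ) :
    pd (fun y => φ (y ∘ Sum.inl)) d z
      = Sum.elim (fun j => pd φ j (z ∘ Sum.inl)) (fun _ => 0) d := by
  have h : HasFDerivAt (fun y : (ι ⊕ κ) → ℝ => φ (y ∘ Sum.inl))
      ((fderiv ℝ φ (z ∘ Sum.inl)).comp restL) z := by
    have hL : HasFDerivAt (fun y : (ι ⊕ κ) → ℝ => y ∘ Sum.inl) restL z :=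
      (restL (ι := ι) (κ := κ)).hasFDerivAt
    exact hφ.hasFDerivAt.comp z hL
  rw [pd, h.fderiv]
  cases d with
  | inl j => simp [restL_single_inl, pd]
  | inr j => simp [restL_single_inr]

lemma pd_comp_right {φ : (κ → ℝ) → ℝ} {z : (ι ⊕ κ) → ℝ}
    (hφ : DifferentiableAt ℝ φ (z ∘ Sum.inr)) (d : ι ⊕ κ) :
    pd (fun y => φ (y ∘ Sum.inr)) d z
      = Sum.elim (fun _ => 0) (fun j => pd φ j (z ∘ Sum.inr)) d := by
  have h : HasFDerivAt (fun y : (ι ⊕ κ) → ℝ => φ (y ∘ Sum.inr))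
      ((fderiv ℝ φ (z ∘ Sum.inr)).comp restR) z := by
    have hR : HasFDerivAt (fun y : (ι ⊕ κ) → ℝ => y ∘ Sum.inr) restR z :=
      (restR (ι := ι) (κ := κ)).hasFDerivAt
    exact hφ.hasFDerivAt.comp z hR
  rw [pd, h.fderiv]
  cases d with
  | inl j => simp [restR_single_inl]
  | inr j => simp [restR_single_inr, pd]

lemma diffAt_comp_pair {Φ : (ι → ℝ) × (κ → ℝ) → ℝ} {z : (ι ⊕ κ) → ℝ}
    (hΦ : DifferentiableAt ℝ Φ (z ∘ Sum.inl, z ∘ Sum.inr)) :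
    DifferentiableAt ℝ (fun y => Φ (y ∘ Sum.inl, y ∘ Sum.inr)) z := by
  have hP : DifferentiableAt ℝ (fun y : (ι ⊕ κ) → ℝ => (y ∘ Sum.inl, y ∘ Sum.inr)) z :=
    ((restL (ι := ι) (κ := κ)).prod restR).differentiableAt
  exact hΦ.comp z hP

lemma pd_comp_pair {Φ : (ι → ℝ) × (κ → ℝ) → ℝ} {z : (ι ⊕ κ) → ℝ}
    (hΦ : DifferentiableAt ℝ Φ (z ∘ Sum.inl, z ∘ Sum.inr)) (d : ι ⊕ κ) :
    pd (fun y => Φ (y ∘ Sum.inl, y ∘ Sum.inr)) d z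
      = Sum.elim
          (fun i => fderiv ℝ Φ (z ∘ Sum.inl, z ∘ Sum.inr) (Pi.single i 1, 0))
          (fun j => fderiv ℝ Φ (z ∘ Sum.inl, z ∘ Sum.inr) (0, Pi.single j 1)) d := by
  have h : HasFDerivAt (fun y : (ι ⊕ κ) → ℝ => Φ (y ∘ Sum.inl, y ∘ Sum.inr))
      ((fderiv ℝ Φ (z ∘ Sum.inl, z ∘ Sum.inr)).comp (restL.prod restR)) z := by
    have hP : HasFDerivAt (fun y : (ι ⊕ κ) → ℝ => (y ∘ Sum.inl, y ∘ Sum.inr))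
        ((restL (ι := ι) (κ := κ)).prod restR) z :=
      ((restL (ι := ι) (κ := κ)).prod restR).hasFDerivAt
    exact hΦ.hasFDerivAt.comp z hP
  rw [pd, h.fderiv]
  cases d with
  | inl i =>
    simp [ContinuousLinearMap.prod_apply, restL_single_inl, restR_single_inl]
  | inr j =>
    simp [ContinuousLinearMap.prod_apply, restL_single_inr, restR_single_inr]

lemma pd_fst {Φ : (ι → ℝ) × (κ → ℝ) → ℝ} {a : ι → ℝ} {b : κ → ℝ}
    (hΦ : DifferentiableAt ℝ Φ (a, b)) (i : ι) :
    pd (fun y => Φ (y, b)) i a = fderiv ℝ Φ (a, b) (Pi.single i 1, 0) := by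
  have h : HasFDerivAt (fun y : ι → ℝ => Φ (y, b))
      ((fderiv ℝ Φ (a, b)).comp (ContinuousLinearMap.inl ℝ _ _)) a :=
    hΦ.hasFDerivAt.comp a (hasFDerivAt_prodMk_left a b)
  rw [pd, h.fderiv]
  simp

lemma pd_snd {Φ : (ι → ℝ) × (κ → ℝ) → ℝ} {a : ι → ℝ} {b : κ → ℝ}
    (hΦ : DifferentiableAt ℝ Φ (a, b)) (j : κ) :
    pd (fun w => Φ (a, w)) j b = fderiv ℝ Φ (a, b) (0, Pi.single j 1) := by
  have h : HasFDerivAt (fun w : κ → ℝ => Φ (a, w))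
      ((fderiv ℝ Φ (a, b)).comp (ContinuousLinearMap.inr ℝ _ _)) b :=
    hΦ.hasFDerivAt.comp b (hasFDerivAt_prodMk_right a b)
  rw [pd, h.fderiv]
  simp

end SumAux

section CalcAux
variable {τ : Type*} [Fintype τ] [DecidableEq τ]

lemma pd_sum {γ : Type*} {s : Finset γ} {f : γ → (τ → ℝ) → ℝ} {x : τ → ℝ}
    (h : ∀ c ∈ s, DifferentiableAt ℝ (f c) x) (d : τ) :
    pd (fun y => ∑ c ∈ s, f c y) d x = ∑ c ∈ s, pd (f c) d x := by
  simp only [pd]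
  rw [fderiv_fun_sum h]
  simp

lemma pd_mul {f g : (τ → ℝ) → ℝ} {x : τ → ℝ}
    (hf : DifferentiableAt ℝ f x) (hg : DifferentiableAt ℝ g x) (d : τ) :
    pd (fun y => f y * g y) d x = pd f d x * g x + f x * pd g d x := by
  simp only [pd]
  rw [fderiv_fun_mul hf hg]
  simp only [ContinuousLinearMap.add_apply, ContinuousLinearMap.smul_apply, smul_eq_mul]
  ring

lemma pd_neg {f : (τ → ℝ) → ℝ} {x : τ → ℝ} (d : τ) :
    pd (fun y => -f y) d x = -pd f d x := by
  simp only [pd]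
  rw [fderiv_fun_neg]
  simp

lemma pd_const {c : ℝ} {x : τ → ℝ} (d : τ) : pd (fun _ => c) d x = 0 := by
  simp [pd]

end CalcAux

section SndDeriv
variable {E : Type*} [NormedAddCommGroup E] [NormedSpace ℝ E]

lemma fderiv_fderiv_apply {F : E → ℝ} (hF : ContDiff ℝ 2 F) (p v w : E) :
    fderiv ℝ (fun q => fderiv ℝ F q v) p w = fderiv ℝ (fderiv ℝ F) p w v := by
  have hd : DifferentiableAt ℝ (fderiv ℝ F) p :=
    ((hF.fderiv_right (m := 1) (by norm_num)).differentiable (by simp)) p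
  have h : HasFDerivAt (fun q => fderiv ℝ F q v)
      ((ContinuousLinearMap.apply ℝ ℝ v).comp (fderiv ℝ (fderiv ℝ F) p)) p :=
    (ContinuousLinearMap.apply ℝ ℝ v).hasFDerivAt.comp p hd.hasFDerivAt
  rw [h.fderiv]
  simp

lemma snd_deriv_symm {F : E → ℝ} (hF : ContDiff ℝ 2 F) (p v w : E) :
    fderiv ℝ (fderiv ℝ F) p v w = fderiv ℝ (fderiv ℝ F) p w v := by
  have hd : DifferentiableAt ℝ (fderiv ℝ F) p :=
    ((hF.fderiv_right (m := 1) (by norm_num)).differentiable (by simp)) p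
  exact second_derivative_symmetric
    (fun y => ((hF.differentiable (by simp)) y).hasFDerivAt) hd.hasFDerivAt v w

end SndDeriv
section Player
variable {ι κ : Type*} [Fintype ι] [DecidableEq ι] [Fintype κ] [DecidableEq κ]

noncomputable def gradL (F : (ι → ℝ) × (κ → ℝ) → ℝ) (p : (ι → ℝ) × (κ → ℝ)) (i : ι) : ℝ :=
  fderiv ℝ F p (Pi.single i 1, 0)

noncomputable def gradR (F : (ι → ℝ) × (κ → ℝ) → ℝ) (p : (ι → ℝ) × (κ → ℝ)) (j : κ) : ℝ :=
  fderiv ℝ F p (0, Pi.single j 1)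

variable {F : (ι → ℝ) × (κ → ℝ) → ℝ}

lemma contDiff_gradL (hF : ContDiff ℝ 2 F) (i : ι) :
    ContDiff ℝ 1 (fun p => gradL (κ := κ) F p i) :=
  (hF.fderiv_right (m := 1) (by norm_num)).clm_apply contDiff_const

lemma contDiff_gradR (hF : ContDiff ℝ 2 F) (j : κ) :
    ContDiff ℝ 1 (fun p => gradR (ι := ι) F p j) :=
  (hF.fderiv_right (m := 1) (by norm_num)).clm_apply contDiff_const

/-- partial derivative in the first variable equals gradL -/
lemma pd_eq_gradL (hF : ContDiff ℝ 2 F) (a : ι → ℝ) (b : κ → ℝ) (i : ι) :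
    pd (fun y => F (y, b)) i a = gradL F (a, b) i :=
  pd_fst ((hF.differentiable (by simp)) (a, b)) i

lemma pd_eq_gradR (hF : ContDiff ℝ 2 F) (a : ι → ℝ) (b : κ → ℝ) (j : κ) :
    pd (fun w => F (a, w)) j b = gradR F (a, b) j :=
  pd_snd ((hF.differentiable (by simp)) (a, b)) j

/-- evaluation of pd of the composed gradL in the two directions -/
lemma pd_gradL_comp (hF : ContDiff ℝ 2 F) (z : (ι ⊕ κ) → ℝ) (i : ι) (d : ι ⊕ κ) :
    pd (fun y => gradL F (y ∘ Sum.inl, y ∘ Sum.inr) i) d z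
      = Sum.elim
          (fun j => fderiv ℝ (fderiv ℝ F) (z ∘ Sum.inl, z ∘ Sum.inr)
            (Pi.single j 1, 0) (Pi.single i 1, 0))
          (fun j => fderiv ℝ (fderiv ℝ F) (z ∘ Sum.inl, z ∘ Sum.inr)
            (0, Pi.single j 1) (Pi.single i 1, 0)) d := by
  have hdiff : DifferentiableAt ℝ (fun p => gradL (κ := κ) F p i) (z ∘ Sum.inl, z ∘ Sum.inr) :=
    ((contDiff_gradL hF i).differentiable (by simp)) _
  rw [pd_comp_pair hdiff]
  cases d with
  | inl j =>
    simp only [Sum.elim_inl]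
    exact fderiv_fderiv_apply hF _ _ _
  | inr j =>
    simp only [Sum.elim_inr]
    exact fderiv_fderiv_apply hF _ _ _

lemma pd_gradR_comp (hF : ContDiff ℝ 2 F) (z : (ι ⊕ κ) → ℝ) (j : κ) (d : ι ⊕ κ) :
    pd (fun y => gradR F (y ∘ Sum.inl, y ∘ Sum.inr) j) d z
      = Sum.elim
          (fun i => fderiv ℝ (fderiv ℝ F) (z ∘ Sum.inl, z ∘ Sum.inr)
            (Pi.single i 1, 0) (0, Pi.single j 1))
          (fun i => fderiv ℝ (fderiv ℝ F) (z ∘ Sum.inl, z ∘ Sum.inr)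
            (0, Pi.single i 1) (0, Pi.single j 1)) d := by
  have hdiff : DifferentiableAt ℝ (fun p => gradR (ι := ι) F p j) (z ∘ Sum.inl, z ∘ Sum.inr) :=
    ((contDiff_gradR hF j).differentiable (by simp)) _
  rw [pd_comp_pair hdiff]
  cases d with
  | inl i =>
    simp only [Sum.elim_inl]
    exact fderiv_fderiv_apply hF _ _ _
  | inr i =>
    simp only [Sum.elim_inr]
    exact fderiv_fderiv_apply hF _ _ _

end Player
section Player2
variable {ι κ : Type*} [Fintype ι] [DecidableEq ι] [Fintype κ] [DecidableEq κ]
variable {F : (ι → ℝ) × (κ → ℝ) → ℝ}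

noncomputable def hvecL (F : (ι → ℝ) × (κ → ℝ) → ℝ) (M : (ι → ℝ) → Matrix ι ι ℝ)
    (y : (ι ⊕ κ) → ℝ) : ι → ℝ :=
  -((M (y ∘ Sum.inl))⁻¹ *ᵥ fun c => gradL F (y ∘ Sum.inl, y ∘ Sum.inr) c)

noncomputable def hvecR (F : (ι → ℝ) × (κ → ℝ) → ℝ) (N : (κ → ℝ) → Matrix κ κ ℝ)
    (y : (ι ⊕ κ) → ℝ) : κ → ℝ :=
  -((N (y ∘ Sum.inr))⁻¹ *ᵥ fun c => gradR F (y ∘ Sum.inl, y ∘ Sum.inr) c)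

variable {M : (ι → ℝ) → Matrix ι ι ℝ} {N : (κ → ℝ) → Matrix κ κ ℝ}

lemma dML (hMsm : ∀ i j, ContDiff ℝ (⊤ : ℕ∞) fun x => M x i j) (i l : ι) (z : (ι ⊕ κ) → ℝ) :
    DifferentiableAt ℝ (fun y => M (y ∘ Sum.inl) i l) z :=
  diffAt_comp_left (((hMsm i l).differentiable (by simp)) _)

lemma dMR (hNsm : ∀ i j, ContDiff ℝ (⊤ : ℕ∞) fun x => N x i j) (i l : κ) (z : (ι ⊕ κ) → ℝ) :
    DifferentiableAt ℝ (fun y => N (y ∘ Sum.inr) i l) z :=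
  diffAt_comp_right (((hNsm i l).differentiable (by simp)) _)

lemma dInvL (hMsm : ∀ i j, ContDiff ℝ (⊤ : ℕ∞) fun x => M x i j) (hMpos : ∀ x, (M x).PosDef)
    (i l : ι) (z : (ι ⊕ κ) → ℝ) :
    DifferentiableAt ℝ (fun y => (M (y ∘ Sum.inl))⁻¹ i l) z :=
  diffAt_comp_left (differentiableAt_matrix_inv
    (fun i j => (((hMsm i j).differentiable (by simp)) _))
    (hMpos _).det_pos.ne' i l)

lemma dInvR (hNsm : ∀ i j, ContDiff ℝ (⊤ : ℕ∞) fun x => N x i j) (hNpos : ∀ x, (N x).PosDef)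
    (i l : κ) (z : (ι ⊕ κ) → ℝ) :
    DifferentiableAt ℝ (fun y => (N (y ∘ Sum.inr))⁻¹ i l) z :=
  diffAt_comp_right (differentiableAt_matrix_inv
    (fun i j => (((hNsm i j).differentiable (by simp)) _))
    (hNpos _).det_pos.ne' i l)

lemma dGradL (hF : ContDiff ℝ 2 F) (i : ι) (z : (ι ⊕ κ) → ℝ) :
    DifferentiableAt ℝ (fun y => gradL F (y ∘ Sum.inl, y ∘ Sum.inr) i) z :=
  diffAt_comp_pair (((contDiff_gradL hF i).differentiable (by simp)) _)

lemma dGradR (hF : ContDiff ℝ 2 F) (j : κ) (z : (ι ⊕ κ) → ℝ) :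
    DifferentiableAt ℝ (fun y => gradR F (y ∘ Sum.inl, y ∘ Sum.inr) j) z :=
  diffAt_comp_pair (((contDiff_gradR hF j).differentiable (by simp)) _)

lemma hvecL_eq (y : (ι ⊕ κ) → ℝ) (l : ι) :
    hvecL F M y l
      = -∑ c, (M (y ∘ Sum.inl))⁻¹ l c * gradL F (y ∘ Sum.inl, y ∘ Sum.inr) c := by
  simp [hvecL, Matrix.mulVec, dotProduct]

lemma hvecR_eq (y : (ι ⊕ κ) → ℝ) (l : κ) :
    hvecR F N y l
      = -∑ c, (N (y ∘ Sum.inr))⁻¹ l c * gradR F (y ∘ Sum.inl, y ∘ Sum.inr) c := by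
  simp [hvecR, Matrix.mulVec, dotProduct]

lemma dhvecL (hF : ContDiff ℝ 2 F) (hMsm : ∀ i j, ContDiff ℝ (⊤ : ℕ∞) fun x => M x i j)
    (hMpos : ∀ x, (M x).PosDef) (l : ι) (z : (ι ⊕ κ) → ℝ) :
    DifferentiableAt ℝ (fun y => hvecL F M y l) z := by
  have e : (fun y => hvecL F M y l)
      = fun y => -∑ c, (M (y ∘ Sum.inl))⁻¹ l c * gradL F (y ∘ Sum.inl, y ∘ Sum.inr) c := by
    funext y; exact hvecL_eq y l
  rw [e]
  exact (DifferentiableAt.fun_sum fun c _ =>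
    (dInvL hMsm hMpos l c z).fun_mul (dGradL hF c z)).fun_neg

lemma dhvecR (hF : ContDiff ℝ 2 F) (hNsm : ∀ i j, ContDiff ℝ (⊤ : ℕ∞) fun x => N x i j)
    (hNpos : ∀ x, (N x).PosDef) (l : κ) (z : (ι ⊕ κ) → ℝ) :
    DifferentiableAt ℝ (fun y => hvecR F N y l) z := by
  have e : (fun y => hvecR F N y l)
      = fun y => -∑ c, (N (y ∘ Sum.inr))⁻¹ l c * gradR F (y ∘ Sum.inl, y ∘ Sum.inr) c := by
    funext y; exact hvecR_eq y l
  rw [e]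
  exact (DifferentiableAt.fun_sum fun c _ =>
    (dInvR hNsm hNpos l c z).fun_mul (dGradR hF c z)).fun_neg

lemma cancelL (hMpos : ∀ x, (M x).PosDef) (i : ι) :
    (fun y : (ι ⊕ κ) → ℝ => ∑ l, M (y ∘ Sum.inl) i l * hvecL F M y l)
      = fun y => -(gradL F (y ∘ Sum.inl, y ∘ Sum.inr) i) := by
  funext y
  have : ∑ l, M (y ∘ Sum.inl) i l * hvecL F M y l
      = (M (y ∘ Sum.inl) *ᵥ hvecL F M y) i := by
    simp [Matrix.mulVec, dotProduct]
  rw [this, hvecL, Matrix.mulVec_neg, Matrix.mulVec_mulVec,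
    Matrix.mul_nonsing_inv _ (hMpos _).det_pos.ne'.isUnit, Matrix.one_mulVec]
  simp

lemma cancelR (hNpos : ∀ x, (N x).PosDef) (j : κ) :
    (fun y : (ι ⊕ κ) → ℝ => ∑ l, N (y ∘ Sum.inr) j l * hvecR F N y l)
      = fun y => -(gradR F (y ∘ Sum.inl, y ∘ Sum.inr) j) := by
  funext y
  have : ∑ l, N (y ∘ Sum.inr) j l * hvecR F N y l
      = (N (y ∘ Sum.inr) *ᵥ hvecR F N y) j := by
    simp [Matrix.mulVec, dotProduct]
  rw [this, hvecR, Matrix.mulVec_neg, Matrix.mulVec_mulVec,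
    Matrix.mul_nonsing_inv _ (hNpos _).det_pos.ne'.isUnit, Matrix.one_mulVec]
  simp

lemma keyL (hF : ContDiff ℝ 2 F) (hMsm : ∀ i j, ContDiff ℝ (⊤ : ℕ∞) fun x => M x i j)
    (hMpos : ∀ x, (M x).PosDef) (z : (ι ⊕ κ) → ℝ) (i : ι) (d : ι ⊕ κ) :
    ∑ l, M (z ∘ Sum.inl) i l * pd (fun y => hvecL F M y l) d z
      = -(pd (fun y => gradL F (y ∘ Sum.inl, y ∘ Sum.inr) i) d z)
        - ∑ l, pd (fun y => M (y ∘ Sum.inl) i l) d z * hvecL F M z l := by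
  have h1 : pd (fun y => ∑ l, M (y ∘ Sum.inl) i l * hvecL F M y l) d z
      = ∑ l, (pd (fun y => M (y ∘ Sum.inl) i l) d z * hvecL F M z l
          + M (z ∘ Sum.inl) i l * pd (fun y => hvecL F M y l) d z) := by
    rw [pd_sum (fun l _ => (dML hMsm i l z).fun_mul (dhvecL hF hMsm hMpos l z)) d]
    exact Finset.sum_congr rfl fun l _ =>
      pd_mul (dML hMsm i l z) (dhvecL hF hMsm hMpos l z) d
  have h2 : pd (fun y => ∑ l, M (y ∘ Sum.inl) i l * hvecL F M y l) d z
      = -(pd (fun y => gradL F (y ∘ Sum.inl, y ∘ Sum.inr) i) d z) := by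
    rw [cancelL hMpos i]
    exact pd_neg d
  rw [h1, Finset.sum_add_distrib] at h2
  linarith [h2]

lemma keyR (hF : ContDiff ℝ 2 F) (hNsm : ∀ i j, ContDiff ℝ (⊤ : ℕ∞) fun x => N x i j)
    (hNpos : ∀ x, (N x).PosDef) (z : (ι ⊕ κ) → ℝ) (j : κ) (d : ι ⊕ κ) :
    ∑ l, N (z ∘ Sum.inr) j l * pd (fun y => hvecR F N y l) d z
      = -(pd (fun y => gradR F (y ∘ Sum.inl, y ∘ Sum.inr) j) d z)
        - ∑ l, pd (fun y => N (y ∘ Sum.inr) j l) d z * hvecR F N z l := by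
  have h1 : pd (fun y => ∑ l, N (y ∘ Sum.inr) j l * hvecR F N y l) d z
      = ∑ l, (pd (fun y => N (y ∘ Sum.inr) j l) d z * hvecR F N z l
          + N (z ∘ Sum.inr) j l * pd (fun y => hvecR F N y l) d z) := by
    rw [pd_sum (fun l _ => (dMR hNsm j l z).fun_mul (dhvecR hF hNsm hNpos l z)) d]
    exact Finset.sum_congr rfl fun l _ =>
      pd_mul (dMR hNsm j l z) (dhvecR hF hNsm hNpos l z) d
  have h2 : pd (fun y => ∑ l, N (y ∘ Sum.inr) j l * hvecR F N y l) d z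
      = -(pd (fun y => gradR F (y ∘ Sum.inl, y ∘ Sum.inr) j) d z) := by
    rw [cancelR hNpos j]
    exact pd_neg d
  rw [h1, Finset.sum_add_distrib] at h2
  linarith [h2]

end Player2
section Glue
variable {ι κ : Type*} [Fintype ι] [DecidableEq ι] [Fintype κ] [DecidableEq κ]
variable {F : (ι → ℝ) × (κ → ℝ) → ℝ}

lemma pd_const_mul {τ : Type*} [Fintype τ] [DecidableEq τ] {f : (τ → ℝ) → ℝ} {x : τ → ℝ}
    (hf : DifferentiableAt ℝ f x) (c : ℝ) (d : τ) :
    pd (fun y => c * f y) d x = c * pd f d x := by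
  simp only [pd]
  rw [fderiv_const_mul hf]
  simp

lemma inv_symm {M : Matrix ι ι ℝ} (h : M.IsSymm) : (M⁻¹).IsSymm := by
  unfold Matrix.IsSymm
  rw [Matrix.transpose_nonsing_inv, h.eq]

lemma christ_sum {M : (ι → ℝ) → Matrix ι ι ℝ} {x : ι → ℝ} (hsymm : (M x).IsSymm)
    (v : ι → ℝ) (i j : ι) :
    ∑ c, christoffel M c i j x * v c
      = (1 / 2) * ∑ l, (pd (fun y => M y i l) j x + pd (fun y => M y j l) i x
          - pd (fun y => M y i j) l x) * ((M x)⁻¹ *ᵥ v) l := by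
  have hinv : ∀ c l, (M x)⁻¹ c l = (M x)⁻¹ l c := fun c l => (inv_symm hsymm).apply l c
  simp only [christoffel, Matrix.mulVec, dotProduct, Finset.mul_sum, Finset.sum_mul]
  rw [Finset.sum_comm]
  refine Finset.sum_congr rfl fun l _ => Finset.sum_congr rfl fun c _ => ?_
  rw [hinv c l]
  ring

lemma riemHess_eq_L {M : (ι → ℝ) → Matrix ι ι ℝ} (hF : ContDiff ℝ 2 F)
    (a : ι → ℝ) (b : κ → ℝ) (i j : ι) :
    riemHess M (fun y => F (y, b)) a i j
      = fderiv ℝ (fderiv ℝ F) (a, b) (Pi.single i 1, 0) (Pi.single j 1, 0)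
        - ∑ c, christoffel M c i j a * gradL F (a, b) c := by
  simp only [riemHess, Matrix.of_apply, christoffel]
  congr 1
  · have e : (fun y => pd (fun x => F (x, b)) j y) = fun y => gradL F (y, b) j :=
      funext fun y => pd_eq_gradL hF y b j
    rw [e]
    have h2 := pd_fst (Φ := fun p => gradL F p j)
      (((contDiff_gradL hF j).differentiable (by simp)) (a, b)) i
    exact h2.trans (fderiv_fderiv_apply hF (a, b) _ _)
  · refine Finset.sum_congr rfl fun c _ => ?_
    rw [show pd (fun y => F (y, b)) c a = gradL F (a, b) c from pd_eq_gradL hF a b c]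

lemma riemHess_eq_R {N : (κ → ℝ) → Matrix κ κ ℝ} (hF : ContDiff ℝ 2 F)
    (a : ι → ℝ) (b : κ → ℝ) (i j : κ) :
    riemHess N (fun w => F (a, w)) b i j
      = fderiv ℝ (fderiv ℝ F) (a, b) (0, Pi.single i 1) (0, Pi.single j 1)
        - ∑ c, christoffel N c i j b * gradR F (a, b) c := by
  simp only [riemHess, Matrix.of_apply, christoffel]
  congr 1
  · have e : (fun w => pd (fun x => F (a, x)) j w) = fun w => gradR F (a, w) j :=
      funext fun w => pd_eq_gradR hF a w j
    rw [e]
    have h2 := pd_snd (Φ := fun p => gradR F p j)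
      (((contDiff_gradR hF j).differentiable (by simp)) (a, b)) i
    exact h2.trans (fderiv_fderiv_apply hF (a, b) _ _)
  · refine Finset.sum_congr rfl fun c _ => ?_
    rw [show pd (fun w => F (a, w)) c b = gradR F (a, b) c from pd_eq_gradR hF a b c]

end Glue

section PSD
variable {ι κ : Type*} [Fintype ι] [DecidableEq ι] [Fintype κ] [DecidableEq κ]

lemma posSemidef_add {A B : Matrix ι ι ℝ} (hA : A.PosSemidef) (hB : B.PosSemidef) :
    (A + B).PosSemidef := by
  rw [Matrix.posSemidef_iff_dotProduct_mulVec] at hA hB ⊢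
  refine ⟨hA.1.add hB.1, fun x => ?_⟩
  have h := add_nonneg (hA.2 x) (hB.2 x)
  have e : star x ⬝ᵥ ((A + B) *ᵥ x) = star x ⬝ᵥ (A *ᵥ x) + star x ⬝ᵥ (B *ᵥ x) := by
    rw [Matrix.add_mulVec, dotProduct_add]
  rw [e]; exact h

lemma posSemidef_smul {A : Matrix ι ι ℝ} {c : ℝ} (hc : 0 ≤ c) (hA : A.PosSemidef) :
    (c • A).PosSemidef := by
  rw [Matrix.posSemidef_iff_dotProduct_mulVec] at hA ⊢
  refine ⟨?_, fun x => ?_⟩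
  · rw [Matrix.IsHermitian, Matrix.conjTranspose_smul, hA.1.eq, star_trivial]
  · have h := mul_nonneg hc (hA.2 x)
    have e : star x ⬝ᵥ ((c • A) *ᵥ x) = c * (star x ⬝ᵥ (A *ᵥ x)) := by
      rw [Matrix.smul_mulVec, dotProduct_smul, smul_eq_mul]
    rw [e]; exact h

lemma posSemidef_fromBlocks {A : Matrix ι ι ℝ} {D : Matrix κ κ ℝ}
    (hA : A.PosSemidef) (hD : D.PosSemidef) :
    (Matrix.fromBlocks A 0 0 D).PosSemidef := by
  rw [Matrix.posSemidef_iff_dotProduct_mulVec] at hA hD ⊢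
  constructor
  · have : (Matrix.fromBlocks A 0 0 D)ᴴ = Matrix.fromBlocks Aᴴ 0 0 Dᴴ := by
      rw [Matrix.fromBlocks_conjTranspose]
      simp
    rw [Matrix.IsHermitian, this, hA.1.eq, hD.1.eq]
  · intro x
    have h := add_nonneg (hA.2 (x ∘ Sum.inl)) (hD.2 (x ∘ Sum.inr))
    have e : dotProduct (star x) ((Matrix.fromBlocks A 0 0 D) *ᵥ x)
        = dotProduct (star (x ∘ Sum.inl)) (A *ᵥ (x ∘ Sum.inl))
          + dotProduct (star (x ∘ Sum.inr)) (D *ᵥ (x ∘ Sum.inr)) := by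
      rw [Matrix.fromBlocks_mulVec]
      simp [dotProduct, Fintype.sum_sum_type, star_trivial]
    rw [e]; exact h

end PSD

/-- Two-player natural gradient game with scaled skew-symmetric coupling:
the coupled dynamics satisfy the contraction inequality with rate min(α₁,α₂)
in the metric diag(M₁, k·M₂). -/
theorem skew_game_contraction {n m : ℕ}
    (f₁ f₂ : (Fin n → ℝ) → (Fin m → ℝ) → ℝ)
    (M₁ : (Fin n → ℝ) → Matrix (Fin n) (Fin n) ℝ)
    (M₂ : (Fin m → ℝ) → Matrix (Fin m) (Fin m) ℝ)
    (α₁ α₂ k : ℝ) (hα₁ : 0 < α₁) (hα₂ : 0 < α₂) (hk : 0 < k)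
    (hf₁ : ContDiff ℝ 2 (fun p : (Fin n → ℝ) × (Fin m → ℝ) => f₁ p.1 p.2))
    (hf₂ : ContDiff ℝ 2 (fun p : (Fin n → ℝ) × (Fin m → ℝ) => f₂ p.1 p.2))
    (hM₁sm : ∀ i j, ContDiff ℝ (⊤ : ℕ∞) fun x => M₁ x i j)
    (hM₁symm : ∀ x, (M₁ x).IsSymm) (hM₁pos : ∀ x, (M₁ x).PosDef)
    (hM₂sm : ∀ i j, ContDiff ℝ (⊤ : ℕ∞) fun x => M₂ x i j)
    (hM₂symm : ∀ x, (M₂ x).IsSymm) (hM₂pos : ∀ x, (M₂ x).PosDef)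
    (hH₁ : ∀ (x₁ : Fin n → ℝ) (x₂ : Fin m → ℝ),
      (riemHess M₁ (fun y => f₁ y x₂) x₁ - α₁ • M₁ x₁).PosSemidef)
    (hH₂ : ∀ (x₁ : Fin n → ℝ) (x₂ : Fin m → ℝ),
      (riemHess M₂ (fun w => f₂ x₁ w) x₂ - α₂ • M₂ x₂).PosSemidef)
    (hskew : ∀ (x₁ : Fin n → ℝ) (x₂ : Fin m → ℝ) (i : Fin n) (j : Fin m),
      pd (fun w => pd (fun y => f₁ y w) i x₁) j x₂
        = -k * pd (fun y => pd (fun w => f₂ y w) j x₂) i x₁) :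
    ∀ z : (Fin n ⊕ Fin m) → ℝ,
      (-(mDotA (gameMetric k M₁ M₂) (gameDynamics f₁ f₂ M₁ M₂) z
          + (jacobianA (gameDynamics f₁ f₂ M₁ M₂) z)ᵀ * gameMetric k M₁ M₂ z
          + gameMetric k M₁ M₂ z * jacobianA (gameDynamics f₁ f₂ M₁ M₂) z
          + (2 * min α₁ α₂) • gameMetric k M₁ M₂ z)).PosSemidef := by
  intro z
  have hdyn : gameDynamics f₁ f₂ M₁ M₂
      = fun y => Sum.elim (hvecL (fun p => f₁ p.1 p.2) M₁ y)
          (hvecR (fun p => f₂ p.1 p.2) M₂ y) := by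
    funext y
    simp only [gameDynamics, hvecL, hvecR]
    rw [show (fun i => pd (fun x => f₁ x (y ∘ Sum.inr)) i (y ∘ Sum.inl))
        = fun c => gradL (fun p => f₁ p.1 p.2) (y ∘ Sum.inl, y ∘ Sum.inr) c from
      funext fun c => pd_eq_gradL hf₁ _ _ c]
    rw [show (fun j => pd (fun w => f₂ (y ∘ Sum.inl) w) j (y ∘ Sum.inr))
        = fun c => gradR (fun p => f₂ p.1 p.2) (y ∘ Sum.inl, y ∘ Sum.inr) c from
      funext fun c => pd_eq_gradR hf₂ _ _ c]
  rw [hdyn]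
  have hP : ((2:ℝ) • riemHess M₁ (fun y => (fun p : (Fin n → ℝ) × (Fin m → ℝ) => f₁ p.1 p.2) (y, z ∘ Sum.inr)) (z ∘ Sum.inl)
      - (2 * min α₁ α₂) • M₁ (z ∘ Sum.inl)).PosSemidef := by
    have h1 := hH₁ (z ∘ Sum.inl) (z ∘ Sum.inr)
    have e : (2:ℝ) • riemHess M₁ (fun y => (fun p : (Fin n → ℝ) × (Fin m → ℝ) => f₁ p.1 p.2) (y, z ∘ Sum.inr)) (z ∘ Sum.inl)
        - (2 * min α₁ α₂) • M₁ (z ∘ Sum.inl)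
        = (2:ℝ) • (riemHess M₁ (fun y => f₁ y (z ∘ Sum.inr)) (z ∘ Sum.inl) - α₁ • M₁ (z ∘ Sum.inl))
          + (2 * (α₁ - min α₁ α₂)) • M₁ (z ∘ Sum.inl) := by
      show (2:ℝ) • riemHess M₁ (fun y => f₁ y (z ∘ Sum.inr)) (z ∘ Sum.inl)
          - (2 * min α₁ α₂) • M₁ (z ∘ Sum.inl) = _
      ext i' j'
      simp only [Matrix.sub_apply, Matrix.add_apply, Matrix.smul_apply, smul_eq_mul]
      ring
    rw [e]
    exact posSemidef_add (posSemidef_smul (by norm_num) h1)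
      (posSemidef_smul (by linarith [min_le_left α₁ α₂]) (hM₁pos _).posSemidef)
  have hQ : ((2 * k) • riemHess M₂ (fun w => (fun p : (Fin n → ℝ) × (Fin m → ℝ) => f₂ p.1 p.2) (z ∘ Sum.inl, w)) (z ∘ Sum.inr)
      - (2 * k * min α₁ α₂) • M₂ (z ∘ Sum.inr)).PosSemidef := by
    have h1 := hH₂ (z ∘ Sum.inl) (z ∘ Sum.inr)
    have e : (2 * k) • riemHess M₂ (fun w => (fun p : (Fin n → ℝ) × (Fin m → ℝ) => f₂ p.1 p.2) (z ∘ Sum.inl, w)) (z ∘ Sum.inr)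
        - (2 * k * min α₁ α₂) • M₂ (z ∘ Sum.inr)
        = (2 * k) • (riemHess M₂ (fun w => f₂ (z ∘ Sum.inl) w) (z ∘ Sum.inr) - α₂ • M₂ (z ∘ Sum.inr))
          + (2 * k * (α₂ - min α₁ α₂)) • M₂ (z ∘ Sum.inr) := by
      show (2 * k) • riemHess M₂ (fun w => f₂ (z ∘ Sum.inl) w) (z ∘ Sum.inr)
          - (2 * k * min α₁ α₂) • M₂ (z ∘ Sum.inr) = _
      ext i' j'
      simp only [Matrix.sub_apply, Matrix.add_apply, Matrix.smul_apply, smul_eq_mul]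
      ring
    rw [e]
    have hmin : min α₁ α₂ ≤ α₂ := min_le_right α₁ α₂
    exact posSemidef_add (posSemidef_smul (by linarith) h1)
      (posSemidef_smul (by nlinarith) (hM₂pos _).posSemidef)
  have hPSD := posSemidef_fromBlocks hP hQ
  convert hPSD using 1
  ext d e
  cases d with
  | inl i =>
    cases e with
    | inl j =>
      simp only [Matrix.neg_apply, Matrix.add_apply, Matrix.mul_apply,
        Matrix.transpose_apply, Matrix.smul_apply, smul_eq_mul, mDotA, jacobianA,
        gameMetric, Matrix.of_apply, Matrix.fromBlocks_apply₁₁, Matrix.fromBlocks_apply₁₂,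
        Matrix.fromBlocks_apply₂₁, Matrix.fromBlocks_apply₂₂, Matrix.zero_apply,
        Sum.elim_inl, Sum.elim_inr, Fintype.sum_sum_type, Matrix.sub_apply]
      have h1 : ∑ x : Fin n, pd (fun y => M₁ (y ∘ Sum.inl) i j) (Sum.inl x) z
            * hvecL (fun p => f₁ p.1 p.2) M₁ z x
          = ∑ c, pd (fun x => M₁ x i j) c (z ∘ Sum.inl) * hvecL (fun p => f₁ p.1 p.2) M₁ z c :=
        Finset.sum_congr rfl fun c _ => by
          rw [show pd (fun y => M₁ (y ∘ Sum.inl) i j) (Sum.inl c) z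
              = pd (fun x => M₁ x i j) c (z ∘ Sum.inl) from
            pd_comp_left (((hM₁sm i j).differentiable (by simp)) _) (Sum.inl c)]
      have h2 : ∑ x : Fin m, pd (fun y => M₁ (y ∘ Sum.inl) i j) (Sum.inr x) z
            * hvecR (fun p => f₂ p.1 p.2) M₂ z x = 0 :=
        Finset.sum_eq_zero fun c _ => by
          rw [show pd (fun y => M₁ (y ∘ Sum.inl) i j) (Sum.inr c) z = (0:ℝ) from
            pd_comp_left (((hM₁sm i j).differentiable (by simp)) _) (Sum.inr c), zero_mul]
      have h3 : ∑ x : Fin n, pd (fun y => hvecL (fun p => f₁ p.1 p.2) M₁ y x) (Sum.inl i) z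
            * M₁ (z ∘ Sum.inl) x j
          = -(fderiv ℝ (fderiv ℝ (fun p : (Fin n → ℝ) × (Fin m → ℝ) => f₁ p.1 p.2))
                (z ∘ Sum.inl, z ∘ Sum.inr) (Pi.single i 1, 0) (Pi.single j 1, 0))
            - ∑ l, pd (fun x => M₁ x j l) i (z ∘ Sum.inl) * hvecL (fun p => f₁ p.1 p.2) M₁ z l := by
        rw [show (∑ x : Fin n, pd (fun y => hvecL (fun p => f₁ p.1 p.2) M₁ y x) (Sum.inl i) z
              * M₁ (z ∘ Sum.inl) x j)
            = ∑ x : Fin n, M₁ (z ∘ Sum.inl) j x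
              * pd (fun y => hvecL (fun p => f₁ p.1 p.2) M₁ y x) (Sum.inl i) z from
          Finset.sum_congr rfl fun x _ => by
            rw [show M₁ (z ∘ Sum.inl) x j = M₁ (z ∘ Sum.inl) j x from (hM₁symm _).apply j x,
              mul_comm]]
        rw [keyL hf₁ hM₁sm hM₁pos z j (Sum.inl i)]
        rw [show pd (fun y => gradL (fun p : (Fin n → ℝ) × (Fin m → ℝ) => f₁ p.1 p.2)
              (y ∘ Sum.inl, y ∘ Sum.inr) j) (Sum.inl i) z
            = fderiv ℝ (fderiv ℝ (fun p : (Fin n → ℝ) × (Fin m → ℝ) => f₁ p.1 p.2))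
                (z ∘ Sum.inl, z ∘ Sum.inr) (Pi.single i 1, 0) (Pi.single j 1, 0) from
          pd_gradL_comp hf₁ z j (Sum.inl i)]
        congr 1
        exact Finset.sum_congr rfl fun l _ => by
          rw [show pd (fun y => M₁ (y ∘ Sum.inl) j l) (Sum.inl i) z
              = pd (fun x => M₁ x j l) i (z ∘ Sum.inl) from
            pd_comp_left (((hM₁sm j l).differentiable (by simp)) _) (Sum.inl i)]
      have h4 : ∑ x : Fin m, pd (fun y => hvecR (fun p => f₂ p.1 p.2) M₂ y x) (Sum.inl i) z * 0
          = (0:ℝ) := Finset.sum_eq_zero fun c _ => mul_zero _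
      have h5 : ∑ x : Fin n, M₁ (z ∘ Sum.inl) i x
            * pd (fun y => hvecL (fun p => f₁ p.1 p.2) M₁ y x) (Sum.inl j) z
          = -(fderiv ℝ (fderiv ℝ (fun p : (Fin n → ℝ) × (Fin m → ℝ) => f₁ p.1 p.2))
                (z ∘ Sum.inl, z ∘ Sum.inr) (Pi.single i 1, 0) (Pi.single j 1, 0))
            - ∑ l, pd (fun x => M₁ x i l) j (z ∘ Sum.inl) * hvecL (fun p => f₁ p.1 p.2) M₁ z l := by
        rw [keyL hf₁ hM₁sm hM₁pos z i (Sum.inl j)]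
        rw [show pd (fun y => gradL (fun p : (Fin n → ℝ) × (Fin m → ℝ) => f₁ p.1 p.2)
              (y ∘ Sum.inl, y ∘ Sum.inr) i) (Sum.inl j) z
            = fderiv ℝ (fderiv ℝ (fun p : (Fin n → ℝ) × (Fin m → ℝ) => f₁ p.1 p.2))
                (z ∘ Sum.inl, z ∘ Sum.inr) (Pi.single j 1, 0) (Pi.single i 1, 0) from
          pd_gradL_comp hf₁ z i (Sum.inl j)]
        rw [snd_deriv_symm hf₁ (z ∘ Sum.inl, z ∘ Sum.inr) (Pi.single j 1, 0) (Pi.single i 1, 0)]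
        congr 1
        exact Finset.sum_congr rfl fun l _ => by
          rw [show pd (fun y => M₁ (y ∘ Sum.inl) i l) (Sum.inl j) z
              = pd (fun x => M₁ x i l) j (z ∘ Sum.inl) from
            pd_comp_left (((hM₁sm i l).differentiable (by simp)) _) (Sum.inl j)]
      have h6 : ∑ x : Fin m, (0:ℝ)
            * pd (fun y => hvecR (fun p => f₂ p.1 p.2) M₂ y x) (Sum.inl j) z
          = (0:ℝ) := Finset.sum_eq_zero fun c _ => zero_mul _
      have hneg : ∀ l, ((M₁ (z ∘ Sum.inl))⁻¹ *ᵥ fun c =>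
            gradL (fun p : (Fin n → ℝ) × (Fin m → ℝ) => f₁ p.1 p.2)
              (z ∘ Sum.inl, z ∘ Sum.inr) c) l
          = -(hvecL (fun p => f₁ p.1 p.2) M₁ z l) := fun l => by
        simp [hvecL]
      have hH : riemHess M₁ (fun y => f₁ y (z ∘ Sum.inr)) (z ∘ Sum.inl) i j
          = fderiv ℝ (fderiv ℝ (fun p : (Fin n → ℝ) × (Fin m → ℝ) => f₁ p.1 p.2))
              (z ∘ Sum.inl, z ∘ Sum.inr) (Pi.single i 1, 0) (Pi.single j 1, 0)
            - ∑ c, christoffel M₁ c i j (z ∘ Sum.inl)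
              * gradL (fun p : (Fin n → ℝ) × (Fin m → ℝ) => f₁ p.1 p.2)
                (z ∘ Sum.inl, z ∘ Sum.inr) c :=
        riemHess_eq_L hf₁ (z ∘ Sum.inl) (z ∘ Sum.inr) i j
      have hC : ∑ c, christoffel M₁ c i j (z ∘ Sum.inl)
            * gradL (fun p : (Fin n → ℝ) × (Fin m → ℝ) => f₁ p.1 p.2)
              (z ∘ Sum.inl, z ∘ Sum.inr) c
          = (1/2) * (-(∑ l, pd (fun x => M₁ x i l) j (z ∘ Sum.inl)
                * hvecL (fun p => f₁ p.1 p.2) M₁ z l)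
              - ∑ l, pd (fun x => M₁ x j l) i (z ∘ Sum.inl)
                * hvecL (fun p => f₁ p.1 p.2) M₁ z l
              + ∑ l, pd (fun x => M₁ x i j) l (z ∘ Sum.inl)
                * hvecL (fun p => f₁ p.1 p.2) M₁ z l) := by
        have h := christ_sum (M := M₁) (x := z ∘ Sum.inl) (hM₁symm _)
          (fun c => gradL (fun p : (Fin n → ℝ) × (Fin m → ℝ) => f₁ p.1 p.2)
            (z ∘ Sum.inl, z ∘ Sum.inr) c) i j
        refine h.trans (congrArg (fun t => (1/2 : ℝ) * t) ?_)
        calc ∑ l, (pd (fun y => M₁ y i l) j (z ∘ Sum.inl) + pd (fun y => M₁ y j l) i (z ∘ Sum.inl)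
                - pd (fun y => M₁ y i j) l (z ∘ Sum.inl))
              * (((M₁ (z ∘ Sum.inl))⁻¹ *ᵥ fun c =>
                  gradL (fun p : (Fin n → ℝ) × (Fin m → ℝ) => f₁ p.1 p.2)
                    (z ∘ Sum.inl, z ∘ Sum.inr) c) l)
            = ∑ l, (-(pd (fun x => M₁ x i l) j (z ∘ Sum.inl)
                  * hvecL (fun p => f₁ p.1 p.2) M₁ z l)
                - pd (fun x => M₁ x j l) i (z ∘ Sum.inl)
                  * hvecL (fun p => f₁ p.1 p.2) M₁ z l
                + pd (fun x => M₁ x i j) l (z ∘ Sum.inl)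
                  * hvecL (fun p => f₁ p.1 p.2) M₁ z l) :=
              Finset.sum_congr rfl fun l _ => by rw [hneg l]; ring
          _ = _ := by
              rw [Finset.sum_add_distrib, Finset.sum_sub_distrib, Finset.sum_neg_distrib]
      rw [h1, h2, h3, h4, h5, h6, hH, hC]
      ring
    | inr j =>
      simp only [Matrix.neg_apply, Matrix.add_apply, Matrix.mul_apply,
        Matrix.transpose_apply, Matrix.smul_apply, smul_eq_mul, mDotA, jacobianA,
        gameMetric, Matrix.of_apply, Matrix.fromBlocks_apply₁₁, Matrix.fromBlocks_apply₁₂,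
        Matrix.fromBlocks_apply₂₁, Matrix.fromBlocks_apply₂₂, Matrix.zero_apply,
        Sum.elim_inl, Sum.elim_inr, Fintype.sum_sum_type, Matrix.sub_apply]
      have hz1 : ∑ x : Fin n, pd (fun y : (Fin n ⊕ Fin m) → ℝ => (0:ℝ)) (Sum.inl x) z
            * hvecL (fun p => f₁ p.1 p.2) M₁ z x = 0 :=
        Finset.sum_eq_zero fun c _ => by rw [pd_const, zero_mul]
      have hz2 : ∑ x : Fin m, pd (fun y : (Fin n ⊕ Fin m) → ℝ => (0:ℝ)) (Sum.inr x) z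
            * hvecR (fun p => f₂ p.1 p.2) M₂ z x = 0 :=
        Finset.sum_eq_zero fun c _ => by rw [pd_const, zero_mul]
      have hz3 : ∑ x : Fin n, pd (fun y => hvecL (fun p => f₁ p.1 p.2) M₁ y x) (Sum.inl i) z * 0
          = (0:ℝ) := Finset.sum_eq_zero fun c _ => mul_zero _
      have hz4 : ∑ x : Fin m, (0:ℝ)
            * pd (fun y => hvecR (fun p => f₂ p.1 p.2) M₂ y x) (Sum.inr j) z
          = (0:ℝ) := Finset.sum_eq_zero fun c _ => zero_mul _
      have hu4 : (∑ x : Fin m, pd (fun y => hvecR (fun p => f₂ p.1 p.2) M₂ y x) (Sum.inl i) z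
            * (k * M₂ (z ∘ Sum.inr) x j))
          = k * (-(fderiv ℝ (fderiv ℝ (fun p : (Fin n → ℝ) × (Fin m → ℝ) => f₂ p.1 p.2))
              (z ∘ Sum.inl, z ∘ Sum.inr) (Pi.single i 1, 0) (0, Pi.single j 1))) := by
        rw [show (∑ x : Fin m, pd (fun y => hvecR (fun p => f₂ p.1 p.2) M₂ y x) (Sum.inl i) z
              * (k * M₂ (z ∘ Sum.inr) x j))
            = k * ∑ x : Fin m, M₂ (z ∘ Sum.inr) j x
              * pd (fun y => hvecR (fun p => f₂ p.1 p.2) M₂ y x) (Sum.inl i) z from by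
          rw [Finset.mul_sum]
          exact Finset.sum_congr rfl fun x _ => by
            rw [show M₂ (z ∘ Sum.inr) x j = M₂ (z ∘ Sum.inr) j x from (hM₂symm _).apply j x]
            ring]
        rw [keyR hf₂ hM₂sm hM₂pos z j (Sum.inl i)]
        rw [show pd (fun y => gradR (fun p : (Fin n → ℝ) × (Fin m → ℝ) => f₂ p.1 p.2)
              (y ∘ Sum.inl, y ∘ Sum.inr) j) (Sum.inl i) z
            = fderiv ℝ (fderiv ℝ (fun p : (Fin n → ℝ) × (Fin m → ℝ) => f₂ p.1 p.2))
              (z ∘ Sum.inl, z ∘ Sum.inr) (Pi.single i 1, 0) (0, Pi.single j 1) from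
          pd_gradR_comp hf₂ z j (Sum.inl i)]
        rw [show (∑ l, pd (fun y => M₂ (y ∘ Sum.inr) j l) (Sum.inl i) z
              * hvecR (fun p => f₂ p.1 p.2) M₂ z l) = (0:ℝ) from
          Finset.sum_eq_zero fun l _ => by
            rw [show pd (fun y => M₂ (y ∘ Sum.inr) j l) (Sum.inl i) z = (0:ℝ) from
              pd_comp_right (((hM₂sm j l).differentiable (by simp)) _) (Sum.inl i), zero_mul]]
        ring
      have hu5 : ∑ x : Fin n, M₁ (z ∘ Sum.inl) i x
            * pd (fun y => hvecL (fun p => f₁ p.1 p.2) M₁ y x) (Sum.inr j) z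
          = -(fderiv ℝ (fderiv ℝ (fun p : (Fin n → ℝ) × (Fin m → ℝ) => f₁ p.1 p.2))
              (z ∘ Sum.inl, z ∘ Sum.inr) (0, Pi.single j 1) (Pi.single i 1, 0)) := by
        rw [keyL hf₁ hM₁sm hM₁pos z i (Sum.inr j)]
        rw [show pd (fun y => gradL (fun p : (Fin n → ℝ) × (Fin m → ℝ) => f₁ p.1 p.2)
              (y ∘ Sum.inl, y ∘ Sum.inr) i) (Sum.inr j) z
            = fderiv ℝ (fderiv ℝ (fun p : (Fin n → ℝ) × (Fin m → ℝ) => f₁ p.1 p.2))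
              (z ∘ Sum.inl, z ∘ Sum.inr) (0, Pi.single j 1) (Pi.single i 1, 0) from
          pd_gradL_comp hf₁ z i (Sum.inr j)]
        rw [show (∑ l, pd (fun y => M₁ (y ∘ Sum.inl) i l) (Sum.inr j) z
              * hvecL (fun p => f₁ p.1 p.2) M₁ z l) = (0:ℝ) from
          Finset.sum_eq_zero fun l _ => by
            rw [show pd (fun y => M₁ (y ∘ Sum.inl) i l) (Sum.inr j) z = (0:ℝ) from
              pd_comp_left (((hM₁sm i l).differentiable (by simp)) _) (Sum.inr j), zero_mul]]
        ring
      have hsk : fderiv ℝ (fderiv ℝ (fun p : (Fin n → ℝ) × (Fin m → ℝ) => f₁ p.1 p.2))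
            (z ∘ Sum.inl, z ∘ Sum.inr) (0, Pi.single j 1) (Pi.single i 1, 0)
          = -k * fderiv ℝ (fderiv ℝ (fun p : (Fin n → ℝ) × (Fin m → ℝ) => f₂ p.1 p.2))
            (z ∘ Sum.inl, z ∘ Sum.inr) (Pi.single i 1, 0) (0, Pi.single j 1) := by
        have h := hskew (z ∘ Sum.inl) (z ∘ Sum.inr) i j
        rw [show pd (fun w => pd (fun y => f₁ y w) i (z ∘ Sum.inl)) j (z ∘ Sum.inr)
            = fderiv ℝ (fderiv ℝ (fun p : (Fin n → ℝ) × (Fin m → ℝ) => f₁ p.1 p.2))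
              (z ∘ Sum.inl, z ∘ Sum.inr) (0, Pi.single j 1) (Pi.single i 1, 0) from by
          rw [show (fun w => pd (fun y => f₁ y w) i (z ∘ Sum.inl))
              = fun w => gradL (fun p : (Fin n → ℝ) × (Fin m → ℝ) => f₁ p.1 p.2)
                  (z ∘ Sum.inl, w) i from funext fun w => pd_eq_gradL hf₁ _ w i]
          exact (pd_snd
            (Φ := fun p => gradL (fun p : (Fin n → ℝ) × (Fin m → ℝ) => f₁ p.1 p.2) p i)
            (((contDiff_gradL hf₁ i).differentiable (by simp)) _) j).trans
            (fderiv_fderiv_apply hf₁ _ _ _)] at h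
        rw [show pd (fun y => pd (fun w => f₂ y w) j (z ∘ Sum.inr)) i (z ∘ Sum.inl)
            = fderiv ℝ (fderiv ℝ (fun p : (Fin n → ℝ) × (Fin m → ℝ) => f₂ p.1 p.2))
              (z ∘ Sum.inl, z ∘ Sum.inr) (Pi.single i 1, 0) (0, Pi.single j 1) from by
          rw [show (fun y => pd (fun w => f₂ y w) j (z ∘ Sum.inr))
              = fun y => gradR (fun p : (Fin n → ℝ) × (Fin m → ℝ) => f₂ p.1 p.2)
                  (y, z ∘ Sum.inr) j from funext fun y => pd_eq_gradR hf₂ y _ j]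
          exact (pd_fst
            (Φ := fun p => gradR (fun p : (Fin n → ℝ) × (Fin m → ℝ) => f₂ p.1 p.2) p j)
            (((contDiff_gradR hf₂ j).differentiable (by simp)) _) i).trans
            (fderiv_fderiv_apply hf₂ _ _ _)] at h
        exact h
      rw [hz1, hz2, hz3, hz4, hu4, hu5, hsk]
      ring
  | inr i =>
    cases e with
    | inl j =>
      simp only [Matrix.neg_apply, Matrix.add_apply, Matrix.mul_apply,
        Matrix.transpose_apply, Matrix.smul_apply, smul_eq_mul, mDotA, jacobianA,
        gameMetric, Matrix.of_apply, Matrix.fromBlocks_apply₁₁, Matrix.fromBlocks_apply₁₂,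
        Matrix.fromBlocks_apply₂₁, Matrix.fromBlocks_apply₂₂, Matrix.zero_apply,
        Sum.elim_inl, Sum.elim_inr, Fintype.sum_sum_type, Matrix.sub_apply]
      have hz1 : ∑ x : Fin n, pd (fun y : (Fin n ⊕ Fin m) → ℝ => (0:ℝ)) (Sum.inl x) z
            * hvecL (fun p => f₁ p.1 p.2) M₁ z x = 0 :=
        Finset.sum_eq_zero fun c _ => by rw [pd_const, zero_mul]
      have hz2 : ∑ x : Fin m, pd (fun y : (Fin n ⊕ Fin m) → ℝ => (0:ℝ)) (Sum.inr x) z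
            * hvecR (fun p => f₂ p.1 p.2) M₂ z x = 0 :=
        Finset.sum_eq_zero fun c _ => by rw [pd_const, zero_mul]
      have hz3 : ∑ x : Fin m, pd (fun y => hvecR (fun p => f₂ p.1 p.2) M₂ y x) (Sum.inr i) z * 0
          = (0:ℝ) := Finset.sum_eq_zero fun c _ => mul_zero _
      have hz4 : ∑ x : Fin n, (0:ℝ)
            * pd (fun y => hvecL (fun p => f₁ p.1 p.2) M₁ y x) (Sum.inl j) z
          = (0:ℝ) := Finset.sum_eq_zero fun c _ => zero_mul _
      have hu3 : ∑ x : Fin n, pd (fun y => hvecL (fun p => f₁ p.1 p.2) M₁ y x) (Sum.inr i) z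
            * M₁ (z ∘ Sum.inl) x j
          = -(fderiv ℝ (fderiv ℝ (fun p : (Fin n → ℝ) × (Fin m → ℝ) => f₁ p.1 p.2))
              (z ∘ Sum.inl, z ∘ Sum.inr) (0, Pi.single i 1) (Pi.single j 1, 0)) := by
        rw [show (∑ x : Fin n, pd (fun y => hvecL (fun p => f₁ p.1 p.2) M₁ y x) (Sum.inr i) z
              * M₁ (z ∘ Sum.inl) x j)
            = ∑ x : Fin n, M₁ (z ∘ Sum.inl) j x
              * pd (fun y => hvecL (fun p => f₁ p.1 p.2) M₁ y x) (Sum.inr i) z from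
          Finset.sum_congr rfl fun x _ => by
            rw [show M₁ (z ∘ Sum.inl) x j = M₁ (z ∘ Sum.inl) j x from (hM₁symm _).apply j x,
              mul_comm]]
        rw [keyL hf₁ hM₁sm hM₁pos z j (Sum.inr i)]
        rw [show pd (fun y => gradL (fun p : (Fin n → ℝ) × (Fin m → ℝ) => f₁ p.1 p.2)
              (y ∘ Sum.inl, y ∘ Sum.inr) j) (Sum.inr i) z
            = fderiv ℝ (fderiv ℝ (fun p : (Fin n → ℝ) × (Fin m → ℝ) => f₁ p.1 p.2))
              (z ∘ Sum.inl, z ∘ Sum.inr) (0, Pi.single i 1) (Pi.single j 1, 0) from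
          pd_gradL_comp hf₁ z j (Sum.inr i)]
        rw [show (∑ l, pd (fun y => M₁ (y ∘ Sum.inl) j l) (Sum.inr i) z
              * hvecL (fun p => f₁ p.1 p.2) M₁ z l) = (0:ℝ) from
          Finset.sum_eq_zero fun l _ => by
            rw [show pd (fun y => M₁ (y ∘ Sum.inl) j l) (Sum.inr i) z = (0:ℝ) from
              pd_comp_left (((hM₁sm j l).differentiable (by simp)) _) (Sum.inr i), zero_mul]]
        ring
      have hu6 : ∑ x : Fin m, k * M₂ (z ∘ Sum.inr) i x
            * pd (fun y => hvecR (fun p => f₂ p.1 p.2) M₂ y x) (Sum.inl j) z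
          = k * (-(fderiv ℝ (fderiv ℝ (fun p : (Fin n → ℝ) × (Fin m → ℝ) => f₂ p.1 p.2))
              (z ∘ Sum.inl, z ∘ Sum.inr) (Pi.single j 1, 0) (0, Pi.single i 1))) := by
        rw [show (∑ x : Fin m, k * M₂ (z ∘ Sum.inr) i x
              * pd (fun y => hvecR (fun p => f₂ p.1 p.2) M₂ y x) (Sum.inl j) z)
            = k * ∑ x : Fin m, M₂ (z ∘ Sum.inr) i x
              * pd (fun y => hvecR (fun p => f₂ p.1 p.2) M₂ y x) (Sum.inl j) z from by
          rw [Finset.mul_sum]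
          exact Finset.sum_congr rfl fun x _ => by ring]
        rw [keyR hf₂ hM₂sm hM₂pos z i (Sum.inl j)]
        rw [show pd (fun y => gradR (fun p : (Fin n → ℝ) × (Fin m → ℝ) => f₂ p.1 p.2)
              (y ∘ Sum.inl, y ∘ Sum.inr) i) (Sum.inl j) z
            = fderiv ℝ (fderiv ℝ (fun p : (Fin n → ℝ) × (Fin m → ℝ) => f₂ p.1 p.2))
              (z ∘ Sum.inl, z ∘ Sum.inr) (Pi.single j 1, 0) (0, Pi.single i 1) from
          pd_gradR_comp hf₂ z i (Sum.inl j)]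
        rw [show (∑ l, pd (fun y => M₂ (y ∘ Sum.inr) i l) (Sum.inl j) z
              * hvecR (fun p => f₂ p.1 p.2) M₂ z l) = (0:ℝ) from
          Finset.sum_eq_zero fun l _ => by
            rw [show pd (fun y => M₂ (y ∘ Sum.inr) i l) (Sum.inl j) z = (0:ℝ) from
              pd_comp_right (((hM₂sm i l).differentiable (by simp)) _) (Sum.inl j), zero_mul]]
        ring
      have hsk : fderiv ℝ (fderiv ℝ (fun p : (Fin n → ℝ) × (Fin m → ℝ) => f₁ p.1 p.2))
            (z ∘ Sum.inl, z ∘ Sum.inr) (0, Pi.single i 1) (Pi.single j 1, 0)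
          = -k * fderiv ℝ (fderiv ℝ (fun p : (Fin n → ℝ) × (Fin m → ℝ) => f₂ p.1 p.2))
            (z ∘ Sum.inl, z ∘ Sum.inr) (Pi.single j 1, 0) (0, Pi.single i 1) := by
        have h := hskew (z ∘ Sum.inl) (z ∘ Sum.inr) j i
        rw [show pd (fun w => pd (fun y => f₁ y w) j (z ∘ Sum.inl)) i (z ∘ Sum.inr)
            = fderiv ℝ (fderiv ℝ (fun p : (Fin n → ℝ) × (Fin m → ℝ) => f₁ p.1 p.2))
              (z ∘ Sum.inl, z ∘ Sum.inr) (0, Pi.single i 1) (Pi.single j 1, 0) from by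
          rw [show (fun w => pd (fun y => f₁ y w) j (z ∘ Sum.inl))
              = fun w => gradL (fun p : (Fin n → ℝ) × (Fin m → ℝ) => f₁ p.1 p.2)
                  (z ∘ Sum.inl, w) j from funext fun w => pd_eq_gradL hf₁ _ w j]
          exact (pd_snd
            (Φ := fun p => gradL (fun p : (Fin n → ℝ) × (Fin m → ℝ) => f₁ p.1 p.2) p j)
            (((contDiff_gradL hf₁ j).differentiable (by simp)) _) i).trans
            (fderiv_fderiv_apply hf₁ _ _ _)] at h
        rw [show pd (fun y => pd (fun w => f₂ y w) i (z ∘ Sum.inr)) j (z ∘ Sum.inl)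
            = fderiv ℝ (fderiv ℝ (fun p : (Fin n → ℝ) × (Fin m → ℝ) => f₂ p.1 p.2))
              (z ∘ Sum.inl, z ∘ Sum.inr) (Pi.single j 1, 0) (0, Pi.single i 1) from by
          rw [show (fun y => pd (fun w => f₂ y w) i (z ∘ Sum.inr))
              = fun y => gradR (fun p : (Fin n → ℝ) × (Fin m → ℝ) => f₂ p.1 p.2)
                  (y, z ∘ Sum.inr) i from funext fun y => pd_eq_gradR hf₂ y _ i]
          exact (pd_fst
            (Φ := fun p => gradR (fun p : (Fin n → ℝ) × (Fin m → ℝ) => f₂ p.1 p.2) p i)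
            (((contDiff_gradR hf₂ i).differentiable (by simp)) _) j).trans
            (fderiv_fderiv_apply hf₂ _ _ _)] at h
        exact h
      rw [hz1, hz2, hz3, hz4, hu3, hu6, hsk]
      ring
    | inr j =>
      simp only [Matrix.neg_apply, Matrix.add_apply, Matrix.mul_apply,
        Matrix.transpose_apply, Matrix.smul_apply, smul_eq_mul, mDotA, jacobianA,
        gameMetric, Matrix.of_apply, Matrix.fromBlocks_apply₁₁, Matrix.fromBlocks_apply₁₂,
        Matrix.fromBlocks_apply₂₁, Matrix.fromBlocks_apply₂₂, Matrix.zero_apply,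
        Sum.elim_inl, Sum.elim_inr, Fintype.sum_sum_type, Matrix.sub_apply]
      have h1 : ∑ x : Fin n, pd (fun y => k * M₂ (y ∘ Sum.inr) i j) (Sum.inl x) z
            * hvecL (fun p => f₁ p.1 p.2) M₁ z x = 0 :=
        Finset.sum_eq_zero fun c _ => by
          rw [pd_const_mul (dMR hM₂sm i j z) k (Sum.inl c),
            show pd (fun y => M₂ (y ∘ Sum.inr) i j) (Sum.inl c) z = (0:ℝ) from
              pd_comp_right (((hM₂sm i j).differentiable (by simp)) _) (Sum.inl c)]
          ring
      have h2 : ∑ x : Fin m, pd (fun y => k * M₂ (y ∘ Sum.inr) i j) (Sum.inr x) z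
            * hvecR (fun p => f₂ p.1 p.2) M₂ z x
          = k * ∑ c, pd (fun x => M₂ x i j) c (z ∘ Sum.inr)
              * hvecR (fun p => f₂ p.1 p.2) M₂ z c := by
        rw [Finset.mul_sum]
        refine Finset.sum_congr rfl fun c _ => ?_
        rw [pd_const_mul (dMR hM₂sm i j z) k (Sum.inr c),
          show pd (fun y => M₂ (y ∘ Sum.inr) i j) (Sum.inr c) z
              = pd (fun x => M₂ x i j) c (z ∘ Sum.inr) from
            pd_comp_right (((hM₂sm i j).differentiable (by simp)) _) (Sum.inr c)]
        ring
      have h3 : ∑ x : Fin n, pd (fun y => hvecL (fun p => f₁ p.1 p.2) M₁ y x) (Sum.inr i) z * 0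
          = (0:ℝ) := Finset.sum_eq_zero fun c _ => mul_zero _
      have h5 : ∑ x : Fin n, (0:ℝ)
            * pd (fun y => hvecL (fun p => f₁ p.1 p.2) M₁ y x) (Sum.inr j) z
          = (0:ℝ) := Finset.sum_eq_zero fun c _ => zero_mul _
      have h4 : ∑ x : Fin m, pd (fun y => hvecR (fun p => f₂ p.1 p.2) M₂ y x) (Sum.inr i) z
            * (k * M₂ (z ∘ Sum.inr) x j)
          = k * (-(fderiv ℝ (fderiv ℝ (fun p : (Fin n → ℝ) × (Fin m → ℝ) => f₂ p.1 p.2))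
                (z ∘ Sum.inl, z ∘ Sum.inr) (0, Pi.single i 1) (0, Pi.single j 1))
              - ∑ l, pd (fun x => M₂ x j l) i (z ∘ Sum.inr)
                * hvecR (fun p => f₂ p.1 p.2) M₂ z l) := by
        rw [show (∑ x : Fin m, pd (fun y => hvecR (fun p => f₂ p.1 p.2) M₂ y x) (Sum.inr i) z
              * (k * M₂ (z ∘ Sum.inr) x j))
            = k * ∑ x : Fin m, M₂ (z ∘ Sum.inr) j x
              * pd (fun y => hvecR (fun p => f₂ p.1 p.2) M₂ y x) (Sum.inr i) z from by
          rw [Finset.mul_sum]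
          exact Finset.sum_congr rfl fun x _ => by
            rw [show M₂ (z ∘ Sum.inr) x j = M₂ (z ∘ Sum.inr) j x from (hM₂symm _).apply j x]
            ring]
        rw [keyR hf₂ hM₂sm hM₂pos z j (Sum.inr i)]
        rw [show pd (fun y => gradR (fun p : (Fin n → ℝ) × (Fin m → ℝ) => f₂ p.1 p.2)
              (y ∘ Sum.inl, y ∘ Sum.inr) j) (Sum.inr i) z
            = fderiv ℝ (fderiv ℝ (fun p : (Fin n → ℝ) × (Fin m → ℝ) => f₂ p.1 p.2))
              (z ∘ Sum.inl, z ∘ Sum.inr) (0, Pi.single i 1) (0, Pi.single j 1) from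
          pd_gradR_comp hf₂ z j (Sum.inr i)]
        rw [show (∑ l, pd (fun y => M₂ (y ∘ Sum.inr) j l) (Sum.inr i) z
              * hvecR (fun p => f₂ p.1 p.2) M₂ z l)
            = ∑ l, pd (fun x => M₂ x j l) i (z ∘ Sum.inr)
              * hvecR (fun p => f₂ p.1 p.2) M₂ z l from
          Finset.sum_congr rfl fun l _ => by
            rw [show pd (fun y => M₂ (y ∘ Sum.inr) j l) (Sum.inr i) z
                = pd (fun x => M₂ x j l) i (z ∘ Sum.inr) from
              pd_comp_right (((hM₂sm j l).differentiable (by simp)) _) (Sum.inr i)]]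
      have h6 : ∑ x : Fin m, k * M₂ (z ∘ Sum.inr) i x
            * pd (fun y => hvecR (fun p => f₂ p.1 p.2) M₂ y x) (Sum.inr j) z
          = k * (-(fderiv ℝ (fderiv ℝ (fun p : (Fin n → ℝ) × (Fin m → ℝ) => f₂ p.1 p.2))
                (z ∘ Sum.inl, z ∘ Sum.inr) (0, Pi.single i 1) (0, Pi.single j 1))
              - ∑ l, pd (fun x => M₂ x i l) j (z ∘ Sum.inr)
                * hvecR (fun p => f₂ p.1 p.2) M₂ z l) := by
        rw [show (∑ x : Fin m, k * M₂ (z ∘ Sum.inr) i x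
              * pd (fun y => hvecR (fun p => f₂ p.1 p.2) M₂ y x) (Sum.inr j) z)
            = k * ∑ x : Fin m, M₂ (z ∘ Sum.inr) i x
              * pd (fun y => hvecR (fun p => f₂ p.1 p.2) M₂ y x) (Sum.inr j) z from by
          rw [Finset.mul_sum]
          exact Finset.sum_congr rfl fun x _ => by ring]
        rw [keyR hf₂ hM₂sm hM₂pos z i (Sum.inr j)]
        rw [show pd (fun y => gradR (fun p : (Fin n → ℝ) × (Fin m → ℝ) => f₂ p.1 p.2)
              (y ∘ Sum.inl, y ∘ Sum.inr) i) (Sum.inr j) z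
            = fderiv ℝ (fderiv ℝ (fun p : (Fin n → ℝ) × (Fin m → ℝ) => f₂ p.1 p.2))
              (z ∘ Sum.inl, z ∘ Sum.inr) (0, Pi.single j 1) (0, Pi.single i 1) from
          pd_gradR_comp hf₂ z i (Sum.inr j)]
        rw [snd_deriv_symm hf₂ (z ∘ Sum.inl, z ∘ Sum.inr) (0, Pi.single j 1) (0, Pi.single i 1)]
        rw [show (∑ l, pd (fun y => M₂ (y ∘ Sum.inr) i l) (Sum.inr j) z
              * hvecR (fun p => f₂ p.1 p.2) M₂ z l)
            = ∑ l, pd (fun x => M₂ x i l) j (z ∘ Sum.inr)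
              * hvecR (fun p => f₂ p.1 p.2) M₂ z l from
          Finset.sum_congr rfl fun l _ => by
            rw [show pd (fun y => M₂ (y ∘ Sum.inr) i l) (Sum.inr j) z
                = pd (fun x => M₂ x i l) j (z ∘ Sum.inr) from
              pd_comp_right (((hM₂sm i l).differentiable (by simp)) _) (Sum.inr j)]]
      have hnegR : ∀ l, ((M₂ (z ∘ Sum.inr))⁻¹ *ᵥ fun c =>
            gradR (fun p : (Fin n → ℝ) × (Fin m → ℝ) => f₂ p.1 p.2)
              (z ∘ Sum.inl, z ∘ Sum.inr) c) l
          = -(hvecR (fun p => f₂ p.1 p.2) M₂ z l) := fun l => by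
        simp [hvecR]
      have hH : riemHess M₂ (fun w => f₂ (z ∘ Sum.inl) w) (z ∘ Sum.inr) i j
          = fderiv ℝ (fderiv ℝ (fun p : (Fin n → ℝ) × (Fin m → ℝ) => f₂ p.1 p.2))
              (z ∘ Sum.inl, z ∘ Sum.inr) (0, Pi.single i 1) (0, Pi.single j 1)
            - ∑ c, christoffel M₂ c i j (z ∘ Sum.inr)
              * gradR (fun p : (Fin n → ℝ) × (Fin m → ℝ) => f₂ p.1 p.2)
                (z ∘ Sum.inl, z ∘ Sum.inr) c :=
        riemHess_eq_R hf₂ (z ∘ Sum.inl) (z ∘ Sum.inr) i j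
      have hC : ∑ c, christoffel M₂ c i j (z ∘ Sum.inr)
            * gradR (fun p : (Fin n → ℝ) × (Fin m → ℝ) => f₂ p.1 p.2)
              (z ∘ Sum.inl, z ∘ Sum.inr) c
          = (1/2) * (-(∑ l, pd (fun x => M₂ x i l) j (z ∘ Sum.inr)
                * hvecR (fun p => f₂ p.1 p.2) M₂ z l)
              - ∑ l, pd (fun x => M₂ x j l) i (z ∘ Sum.inr)
                * hvecR (fun p => f₂ p.1 p.2) M₂ z l
              + ∑ l, pd (fun x => M₂ x i j) l (z ∘ Sum.inr)
                * hvecR (fun p => f₂ p.1 p.2) M₂ z l) := by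
        have h := christ_sum (M := M₂) (x := z ∘ Sum.inr) (hM₂symm _)
          (fun c => gradR (fun p : (Fin n → ℝ) × (Fin m → ℝ) => f₂ p.1 p.2)
            (z ∘ Sum.inl, z ∘ Sum.inr) c) i j
        refine h.trans (congrArg (fun t => (1/2 : ℝ) * t) ?_)
        calc ∑ l, (pd (fun y => M₂ y i l) j (z ∘ Sum.inr) + pd (fun y => M₂ y j l) i (z ∘ Sum.inr)
                - pd (fun y => M₂ y i j) l (z ∘ Sum.inr))
              * (((M₂ (z ∘ Sum.inr))⁻¹ *ᵥ fun c =>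
                  gradR (fun p : (Fin n → ℝ) × (Fin m → ℝ) => f₂ p.1 p.2)
                    (z ∘ Sum.inl, z ∘ Sum.inr) c) l)
            = ∑ l, (-(pd (fun x => M₂ x i l) j (z ∘ Sum.inr)
                  * hvecR (fun p => f₂ p.1 p.2) M₂ z l)
                - pd (fun x => M₂ x j l) i (z ∘ Sum.inr)
                  * hvecR (fun p => f₂ p.1 p.2) M₂ z l
                + pd (fun x => M₂ x i j) l (z ∘ Sum.inr)
                  * hvecR (fun p => f₂ p.1 p.2) M₂ z l) :=
              Finset.sum_congr rfl fun l _ => by rw [hnegR l]; ring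
          _ = _ := by
              rw [Finset.sum_add_distrib, Finset.sum_sub_distrib, Finset.sum_neg_distrib]
      rw [h1, h2, h3, h4, h5, h6, hH, hC]
      ring
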